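/- (Proposition 2, validity.) Suppose the monotonic mediator response assumption holds and E[Y 1 1 − Y 1 0] ≥ 0. Then the average natural indirect effect at treatment level 1 satisfies max{−α, p_{10·1} − p_{10·0} − p_{00·0}, −p_{11·1} − p_{00·1} − p_{10·0}, −p_{01·1}} ≤ δ(1) ≤ min{α, p_{11·1} + p_{10·0} + p_{00·0}, 2·p_{11·1} + 2·p_{00·1}, p_{11·1}}. -/

import Mathlib

set_option linter.unusedSectionVars false
set_option maxHeartbeats 1000000

open MeasureTheory

lemma fin2_cases (x : Fin 2) : x = 0 ∨ x = 1 := by omega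

lemma fin2_cast_nonneg (x : Fin 2) : (0:ℝ) ≤ ((x:ℕ):ℝ) := by positivity

lemma fin2_cast_le_one (x : Fin 2) : ((x:ℕ):ℝ) ≤ 1 := by
  exact_mod_cast Nat.lt_succ_iff.mp x.isLt

section helpers
variable {Ω : Type*} [MeasurableSpace Ω] (P : Measure Ω) [IsProbabilityMeasure P]

lemma fin2_cast_eq_indicator (g : Ω → Fin 2) :
    (fun ω => ((g ω : ℕ) : ℝ)) = Set.indicator {ω | g ω = 1} (1 : Ω → ℝ) := by
  funext ω
  rcases fin2_cases (g ω) with h | h <;>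
    simp [Set.indicator_apply, Set.mem_setOf_eq, h]

lemma integrable_cast (g : Ω → Fin 2) (hg : Measurable g) :
    Integrable (fun ω => ((g ω : ℕ) : ℝ)) P := by
  rw [fin2_cast_eq_indicator]
  exact (integrable_const 1).indicator (hg (measurableSet_singleton 1))

lemma integral_cast (g : Ω → Fin 2) (hg : Measurable g) :
    ∫ ω, ((g ω : ℕ) : ℝ) ∂P = (P {ω | g ω = 1}).toReal := by
  rw [fin2_cast_eq_indicator]
  exact MeasureTheory.integral_indicator_one (hg (measurableSet_singleton 1))

lemma measurable_compYM (M : Ω → Fin 2) (Y : Fin 2 → Ω → Fin 2)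
    (hM : Measurable M) (hY : ∀ m, Measurable (Y m)) :
    Measurable (fun ω => Y (M ω) ω) := by
  have h : (fun ω => Y (M ω) ω) = fun ω => if M ω = 0 then Y 0 ω else Y 1 ω := by
    funext ω; rcases fin2_cases (M ω) with h | h <;> simp [h]
  rw [h]
  exact Measurable.ite (hM (measurableSet_singleton 0)) (hY 0) (hY 1)

lemma integrable_indicator_one' {S : Set Ω} (hS : MeasurableSet S) :
    Integrable (Set.indicator S (1 : Ω → ℝ)) P :=
  (integrable_const 1).indicator hS

end helpers

/-- Average treatment effect on the mediator (ATM): `α = E[M₁ − M₀]`. -/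
noncomputable def atm {Ω : Type*} [MeasurableSpace Ω] (P : Measure Ω)
    (M : Fin 2 → Ω → Fin 2) : ℝ :=
  ∫ ω, (((M 1 ω : ℕ) : ℝ) - ((M 0 ω : ℕ) : ℝ)) ∂P

/-- Average natural indirect effect (ANIE) at treatment level `a`:
`δ(a) = E[Y(a, M₁) − Y(a, M₀)]`. -/
noncomputable def anie {Ω : Type*} [MeasurableSpace Ω] (P : Measure Ω)
    (M : Fin 2 → Ω → Fin 2) (Y : Fin 2 → Fin 2 → Ω → Fin 2) (a : Fin 2) : ℝ :=
  ∫ ω, (((Y a (M 1 ω) ω : ℕ) : ℝ) - ((Y a (M 0 ω) ω : ℕ) : ℝ)) ∂P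

/-- Observable probabilities: `p_{ym·a} = P(Y(a, M_a) = y ∧ M_a = m)`. -/
noncomputable def pobs {Ω : Type*} [MeasurableSpace Ω] (P : Measure Ω)
    (M : Fin 2 → Ω → Fin 2) (Y : Fin 2 → Fin 2 → Ω → Fin 2) (y m a : Fin 2) : ℝ :=
  (P {ω | Y a (M a ω) ω = y ∧ M a ω = m}).toReal

/-- Proposition 2 (validity): under monotonic mediator response and a nonnegative
average effect of the mediator on the outcome, `E[Y 1 1 − Y 1 0] ≥ 0`, the ANIE at
level 1 satisfies
`max{−α, p₁₀·₁ − p₁₀·₀ − p₀₀·₀, −p₁₁·₁ − p₀₀·₁ − p₁₀·₀, −p₀₁·₁} ≤ δ(1)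
  ≤ min{α, p₁₁·₁ + p₁₀·₀ + p₀₀·₀, 2p₁₁·₁ + 2p₀₀·₁, p₁₁·₁}`. -/
theorem prop2_bounds_anie_one
    {Ω : Type*} [MeasurableSpace Ω] (P : Measure Ω) [IsProbabilityMeasure P]
    (M : Fin 2 → Ω → Fin 2) (Y : Fin 2 → Fin 2 → Ω → Fin 2)
    (hM : ∀ b, Measurable (M b)) (hY : ∀ a m, Measurable (Y a m))
    (hMMR : ∀ᵐ ω ∂P, M 0 ω ≤ M 1 ω)
    (hYM : 0 ≤ ∫ ω, (((Y 1 1 ω : ℕ) : ℝ) - ((Y 1 0 ω : ℕ) : ℝ)) ∂P) :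
    max (max (-atm P M) (pobs P M Y 1 0 1 - pobs P M Y 1 0 0 - pobs P M Y 0 0 0))
        (max (-pobs P M Y 1 1 1 - pobs P M Y 0 0 1 - pobs P M Y 1 0 0)
             (-pobs P M Y 0 1 1))
      ≤ anie P M Y 1 ∧
    anie P M Y 1 ≤
      min (min (atm P M) (pobs P M Y 1 1 1 + pobs P M Y 1 0 0 + pobs P M Y 0 0 0))
          (min (2 * pobs P M Y 1 1 1 + 2 * pobs P M Y 0 0 1) (pobs P M Y 1 1 1)) := by
  -- measurability of composed maps
  have hmf1 : Measurable (fun ω => Y 1 (M 1 ω) ω) :=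
    measurable_compYM (M 1) (Y 1) (hM 1) (hY 1)
  have hmf0 : Measurable (fun ω => Y 1 (M 0 ω) ω) :=
    measurable_compYM (M 0) (Y 1) (hM 0) (hY 1)
  -- integrability
  have hif1 : Integrable (fun ω => ((Y 1 (M 1 ω) ω : ℕ) : ℝ)) P := integrable_cast P _ hmf1
  have hif0 : Integrable (fun ω => ((Y 1 (M 0 ω) ω : ℕ) : ℝ)) P := integrable_cast P _ hmf0
  have hiM1 : Integrable (fun ω => ((M 1 ω : ℕ) : ℝ)) P := integrable_cast P _ (hM 1)
  have hiM0 : Integrable (fun ω => ((M 0 ω : ℕ) : ℝ)) P := integrable_cast P _ (hM 0)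
  have hiY11 : Integrable (fun ω => ((Y 1 1 ω : ℕ) : ℝ)) P := integrable_cast P _ (hY 1 1)
  have hiY10 : Integrable (fun ω => ((Y 1 0 ω : ℕ) : ℝ)) P := integrable_cast P _ (hY 1 0)
  -- measurable sets for the observable probabilities
  have mS11 : MeasurableSet {ω | Y 1 (M 1 ω) ω = 1 ∧ M 1 ω = 1} :=
    (hmf1 (measurableSet_singleton 1)).inter ((hM 1) (measurableSet_singleton 1))
  have mS01 : MeasurableSet {ω | Y 1 (M 1 ω) ω = 0 ∧ M 1 ω = 1} :=
    (hmf1 (measurableSet_singleton 0)).inter ((hM 1) (measurableSet_singleton 1))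
  have mT : MeasurableSet {ω | Y 1 (M 1 ω) ω = 0 ∧ M 1 ω = 0} :=
    (hmf1 (measurableSet_singleton 0)).inter ((hM 1) (measurableSet_singleton 0))
  -- pobs as toReal of measures of these sets (definitional)
  have p111 : pobs P M Y 1 1 1 = (P {ω | Y 1 (M 1 ω) ω = 1 ∧ M 1 ω = 1}).toReal := rfl
  have p011 : pobs P M Y 0 1 1 = (P {ω | Y 1 (M 1 ω) ω = 0 ∧ M 1 ω = 1}).toReal := rfl
  have p001 : pobs P M Y 0 0 1 = (P {ω | Y 1 (M 1 ω) ω = 0 ∧ M 1 ω = 0}).toReal := rfl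
  have hp_nonneg : ∀ y m a : Fin 2, 0 ≤ pobs P M Y y m a := fun _ _ _ => ENNReal.toReal_nonneg
  -- bound: anie ≤ atm
  have hA : anie P M Y 1 ≤ atm P M := by
    refine integral_mono_ae (hif1.sub hif0) (hiM1.sub hiM0) ?_
    filter_upwards [hMMR] with ω hle
    rcases fin2_cases (M 0 ω) with h0 | h0 <;> rcases fin2_cases (M 1 ω) with h1 | h1
    · simp [h0, h1]
    · rw [h0, h1]
      have := fin2_cast_le_one (Y 1 1 ω)
      have := fin2_cast_nonneg (Y 1 0 ω)
      simp only [Fin.val_one, Fin.val_zero, Nat.cast_one, Nat.cast_zero]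
      linarith
    · rw [h0, h1] at hle; exact absurd hle (by decide)
    · simp [h0, h1]
  -- bound: -atm ≤ anie
  have hB : -atm P M ≤ anie P M Y 1 := by
    rw [neg_le]
    have hneg : -anie P M Y 1 = ∫ ω, -((((Y 1 (M 1 ω) ω : ℕ) : ℝ)) - ((Y 1 (M 0 ω) ω : ℕ) : ℝ)) ∂P :=
      (integral_neg (fun ω => (((Y 1 (M 1 ω) ω : ℕ) : ℝ)) - ((Y 1 (M 0 ω) ω : ℕ) : ℝ))).symm
    rw [hneg]
    refine integral_mono_ae ((hif1.sub hif0).neg) (hiM1.sub hiM0) ?_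
    filter_upwards [hMMR] with ω hle
    rcases fin2_cases (M 0 ω) with h0 | h0 <;> rcases fin2_cases (M 1 ω) with h1 | h1
    · simp [h0, h1]
    · rw [h0, h1]
      have := fin2_cast_le_one (Y 1 0 ω)
      have := fin2_cast_nonneg (Y 1 1 ω)
      simp only [Fin.val_one, Fin.val_zero, Nat.cast_one, Nat.cast_zero]
      linarith
    · rw [h0, h1] at hle; exact absurd hle (by decide)
    · simp [h0, h1]
  -- bound: anie ≤ p₁₁.₁
  have hC : anie P M Y 1 ≤ pobs P M Y 1 1 1 := by
    rw [p111, ← Measure.real_def, ← MeasureTheory.integral_indicator_one mS11]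
    refine integral_mono_ae (hif1.sub hif0) (integrable_indicator_one' P mS11) ?_
    filter_upwards [hMMR] with ω hle
    have hnn : (0:ℝ) ≤ Set.indicator {ω | Y 1 (M 1 ω) ω = 1 ∧ M 1 ω = 1} (1 : Ω → ℝ) ω := by
      apply Set.indicator_nonneg; intro _ _; norm_num
    rcases fin2_cases (M 0 ω) with h0 | h0 <;> rcases fin2_cases (M 1 ω) with h1 | h1
    · rw [h0, h1]; simpa using hnn
    · rcases fin2_cases (Y 1 1 ω) with hy | hy
      · rw [h0, h1, hy]
        have := fin2_cast_nonneg (Y 1 0 ω)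
        simp only [Fin.val_zero, Nat.cast_zero]
        linarith
      · have hmem : ω ∈ {ω | Y 1 (M 1 ω) ω = 1 ∧ M 1 ω = 1} := by
          rw [Set.mem_setOf_eq, h1]; exact ⟨hy, rfl⟩
        rw [h0, h1, hy, Set.indicator_of_mem hmem]
        have := fin2_cast_nonneg (Y 1 0 ω)
        simp only [Fin.val_one, Nat.cast_one, Pi.one_apply]
        linarith
    · rw [h0, h1] at hle; exact absurd hle (by decide)
    · rw [h0, h1]; simpa using hnn
  -- bound: -p₀₁.₁ ≤ anie
  have hD : -pobs P M Y 0 1 1 ≤ anie P M Y 1 := by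
    rw [neg_le]
    have hneg : -anie P M Y 1 = ∫ ω, -((((Y 1 (M 1 ω) ω : ℕ) : ℝ)) - ((Y 1 (M 0 ω) ω : ℕ) : ℝ)) ∂P :=
      (integral_neg (fun ω => (((Y 1 (M 1 ω) ω : ℕ) : ℝ)) - ((Y 1 (M 0 ω) ω : ℕ) : ℝ))).symm
    rw [hneg, p011, ← Measure.real_def, ← MeasureTheory.integral_indicator_one mS01]
    refine integral_mono_ae ((hif1.sub hif0).neg) (integrable_indicator_one' P mS01) ?_
    filter_upwards [hMMR] with ω hle
    have hnn : (0:ℝ) ≤ Set.indicator {ω | Y 1 (M 1 ω) ω = 0 ∧ M 1 ω = 1} (1 : Ω → ℝ) ω := by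
      apply Set.indicator_nonneg; intro _ _; norm_num
    rcases fin2_cases (M 0 ω) with h0 | h0 <;> rcases fin2_cases (M 1 ω) with h1 | h1
    · rw [h0, h1]; simpa using hnn
    · rcases fin2_cases (Y 1 1 ω) with hy | hy
      · have hmem : ω ∈ {ω | Y 1 (M 1 ω) ω = 0 ∧ M 1 ω = 1} := by
          rw [Set.mem_setOf_eq, h1]; exact ⟨hy, rfl⟩
        rw [h0, h1, hy, Set.indicator_of_mem hmem]
        have := fin2_cast_le_one (Y 1 0 ω)
        simp only [Fin.val_zero, Nat.cast_zero, Pi.one_apply]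
        linarith
      · rw [h0, h1, hy]
        have := fin2_cast_le_one (Y 1 0 ω)
        simp only [Fin.val_one, Nat.cast_one]
        linarith
    · rw [h0, h1] at hle; exact absurd hle (by decide)
    · rw [h0, h1]; simpa using hnn
  -- bound using hYM : -(p₁₁.₁ + p₀₀.₁) ≤ anie
  have hE : -pobs P M Y 1 1 1 - pobs P M Y 0 0 1 ≤ anie P M Y 1 := by
    have key : (∫ ω, (((Y 1 1 ω : ℕ) : ℝ) - ((Y 1 0 ω : ℕ) : ℝ)) ∂P) - anie P M Y 1
        ≤ pobs P M Y 1 1 1 + pobs P M Y 0 0 1 := by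
      have hform : (∫ ω, (((Y 1 1 ω : ℕ) : ℝ) - ((Y 1 0 ω : ℕ) : ℝ)) ∂P) - anie P M Y 1
          = ∫ ω, ((((Y 1 1 ω : ℕ) : ℝ) - ((Y 1 0 ω : ℕ) : ℝ))
              - ((((Y 1 (M 1 ω) ω : ℕ) : ℝ)) - ((Y 1 (M 0 ω) ω : ℕ) : ℝ))) ∂P :=
        (integral_sub (hiY11.sub hiY10) (hif1.sub hif0)).symm
      have hrhs : pobs P M Y 1 1 1 + pobs P M Y 0 0 1
          = ∫ ω, (Set.indicator {ω | Y 1 (M 1 ω) ω = 1 ∧ M 1 ω = 1} (1 : Ω → ℝ) ω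
              + Set.indicator {ω | Y 1 (M 1 ω) ω = 0 ∧ M 1 ω = 0} (1 : Ω → ℝ) ω) ∂P := by
        rw [integral_add (integrable_indicator_one' P mS11) (integrable_indicator_one' P mT),
          MeasureTheory.integral_indicator_one mS11, MeasureTheory.integral_indicator_one mT,
          p111, p001, Measure.real_def, Measure.real_def]
      rw [hform, hrhs]
      refine integral_mono_ae ((hiY11.sub hiY10).sub (hif1.sub hif0))
        ((integrable_indicator_one' P mS11).add (integrable_indicator_one' P mT)) ?_
      filter_upwards [hMMR] with ω hle
      have hnn1 : (0:ℝ) ≤ Set.indicator {ω | Y 1 (M 1 ω) ω = 1 ∧ M 1 ω = 1} (1 : Ω → ℝ) ω := by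
        apply Set.indicator_nonneg; intro _ _; norm_num
      have hnn2 : (0:ℝ) ≤ Set.indicator {ω | Y 1 (M 1 ω) ω = 0 ∧ M 1 ω = 0} (1 : Ω → ℝ) ω := by
        apply Set.indicator_nonneg; intro _ _; norm_num
      rcases fin2_cases (M 0 ω) with h0 | h0 <;> rcases fin2_cases (M 1 ω) with h1 | h1
      · -- M0 = 0, M1 = 0 : LHS = Y11 - Y10, use T if Y10 = 0
        rcases fin2_cases (Y 1 0 ω) with hy | hy
        · have hmem : ω ∈ {ω | Y 1 (M 1 ω) ω = 0 ∧ M 1 ω = 0} := by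
            rw [Set.mem_setOf_eq, h1]; exact ⟨hy, rfl⟩
          rw [h0, h1, hy, Set.indicator_of_mem hmem]
          have := fin2_cast_le_one (Y 1 1 ω)
          simp only [Fin.val_zero, Nat.cast_zero, Pi.one_apply]
          linarith
        · rw [h0, h1, hy]
          have := fin2_cast_le_one (Y 1 1 ω)
          simp only [Fin.val_one, Nat.cast_one]
          linarith
      · -- M0 = 0, M1 = 1 : LHS = 0
        rw [h0, h1]
        have h := add_nonneg hnn1 hnn2
        simp only [sub_self]
        linarith [hnn1, hnn2]
      · rw [h0, h1] at hle; exact absurd hle (by decide)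
      · -- M0 = 1, M1 = 1 : LHS = Y11 - Y10, use S11 if Y11 = 1
        rcases fin2_cases (Y 1 1 ω) with hy | hy
        · rw [h0, h1, hy]
          have := fin2_cast_nonneg (Y 1 0 ω)
          simp only [Fin.val_zero, Nat.cast_zero]
          linarith
        · have hmem : ω ∈ {ω | Y 1 (M 1 ω) ω = 1 ∧ M 1 ω = 1} := by
            rw [Set.mem_setOf_eq, h1]; exact ⟨hy, rfl⟩
          rw [h0, h1, hy, Set.indicator_of_mem hmem]
          have := fin2_cast_nonneg (Y 1 0 ω)
          simp only [Fin.val_one, Nat.cast_one, Pi.one_apply]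
          linarith
    linarith [hYM, key]
  -- redundant lower bound: p₁₀.₁ - p₁₀.₀ - p₀₀.₀ ≤ -atm
  have hF : pobs P M Y 1 0 1 - pobs P M Y 1 0 0 - pobs P M Y 0 0 0 ≤ -atm P M := by
    have hmM10 : MeasurableSet {ω | M 1 ω = 0} := (hM 1) (measurableSet_singleton 0)
    have hmM00 : MeasurableSet {ω | M 0 ω = 0} := (hM 0) (measurableSet_singleton 0)
    have hmB : MeasurableSet {ω | Y 0 (M 0 ω) ω = 0 ∧ M 0 ω = 0} :=
      ((measurable_compYM (M 0) (Y 0) (hM 0) (hY 0)) (measurableSet_singleton 0)).inter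
        ((hM 0) (measurableSet_singleton 0))
    -- p₁₀.₁ ≤ P(M1 = 0)
    have h1 : pobs P M Y 1 0 1 ≤ (P {ω | M 1 ω = 0}).toReal := by
      refine ENNReal.toReal_mono (measure_ne_top P _) (measure_mono ?_)
      intro ω hω; exact hω.2
    -- p₁₀.₀ + p₀₀.₀ = P(M0 = 0)
    have h2 : pobs P M Y 1 0 0 + pobs P M Y 0 0 0 = (P {ω | M 0 ω = 0}).toReal := by
      show (P {ω | Y 0 (M 0 ω) ω = 1 ∧ M 0 ω = 0}).toReal
          + (P {ω | Y 0 (M 0 ω) ω = 0 ∧ M 0 ω = 0}).toReal = _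
      have hdisj : Disjoint {ω | Y 0 (M 0 ω) ω = 1 ∧ M 0 ω = 0}
          {ω | Y 0 (M 0 ω) ω = 0 ∧ M 0 ω = 0} := by
        rw [Set.disjoint_left]
        rintro ω ⟨ha, -⟩ ⟨hb, -⟩
        rw [ha] at hb; exact absurd hb (by decide)
      have hu : {ω | Y 0 (M 0 ω) ω = 1 ∧ M 0 ω = 0} ∪ {ω | Y 0 (M 0 ω) ω = 0 ∧ M 0 ω = 0}
          = {ω | M 0 ω = 0} := by
        ext ω
        simp only [Set.mem_union, Set.mem_setOf_eq]
        rcases fin2_cases (Y 0 (M 0 ω) ω) with h | h <;> simp [h]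
      rw [← ENNReal.toReal_add (measure_ne_top P _) (measure_ne_top P _),
        ← measure_union hdisj hmB, hu]
    -- atm = P(M1 = 1) - P(M0 = 1)
    have h3 : atm P M = (P {ω | M 1 ω = 1}).toReal - (P {ω | M 0 ω = 1}).toReal := by
      show (∫ ω, (((M 1 ω : ℕ) : ℝ) - ((M 0 ω : ℕ) : ℝ)) ∂P) = _
      rw [integral_sub hiM1 hiM0, integral_cast P _ (hM 1), integral_cast P _ (hM 0)]
    -- P(Mb = 0) = 1 - P(Mb = 1)
    have hcompl : ∀ b, (P {ω | M b ω = 0}).toReal = 1 - (P {ω | M b ω = 1}).toReal := by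
      intro b
      have hset : {ω | M b ω = 0} = {ω | M b ω = 1}ᶜ := by
        ext ω
        simp only [Set.mem_setOf_eq, Set.mem_compl_iff]
        rcases fin2_cases (M b ω) with h | h <;> simp [h]
      rw [hset, prob_compl_eq_one_sub
          (show MeasurableSet {ω | M b ω = 1} from (hM b) (measurableSet_singleton 1)),
        ENNReal.toReal_sub_of_le prob_le_one ENNReal.one_ne_top, ENNReal.toReal_one]
    have h4 := hcompl 0
    have h5 := hcompl 1
    linarith
  refine ⟨max_le (max_le ?_ ?_) (max_le ?_ ?_), le_min (le_min hA ?_) (le_min ?_ hC)⟩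
  · exact hB
  · linarith [hF, hB]
  · linarith [hE, hp_nonneg 1 0 0]
  · exact hD
  · linarith [hC, hp_nonneg 1 0 0, hp_nonneg 0 0 0]
  · linarith [hC, hp_nonneg 1 1 1, hp_nonneg 0 0 1]
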